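/- arXiv:0809.1176 — 6 statements merged into one kernel-verified Lean document; each statement's English description precedes it below -/
import Mathlib

section
/- If p and q are idempotents in a unital Banach algebra and ‖p - q‖ < 1/(1 + 2‖p‖), then p and q are conjugate: there exists an invertible u with u·p·u⁻¹ = q. -/
/-!
For idempotents `p`, `q` the element `w = q p + (1 - q)(1 - p)` intertwines them, `w p = q p = q w`,
and `1 - w = q (q - p) - (q - p) p` is small when `p - q` is: with `d = ‖p - q‖` one gets
`‖1 - w‖ ≤ d (2‖p‖ + d) < 1`, so `w` is invertible by the Neumann series and conjugates `p` to `q`.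
-/

section Ring

variable {R : Type*} [Ring R]

def idempotentIntertwiner (p q : R) : R := q * p + (1 - q) * (1 - p)

variable {p q : R}

lemma idempotentIntertwiner_mul_left (hp : IsIdempotentElem p) (hq : IsIdempotentElem q) :
    idempotentIntertwiner p q * p = q * idempotentIntertwiner p q := by
  have hp' : p * p = p := hp
  have hq' : q * q = q := hq
  simp only [idempotentIntertwiner, add_mul, mul_add, sub_mul, mul_sub, one_mul, mul_one,
    mul_assoc, hp', ← mul_assoc q q, hq']
  abel

lemma one_sub_idempotentIntertwiner (hp : IsIdempotentElem p) (hq : IsIdempotentElem q) :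
    1 - idempotentIntertwiner p q = q * (q - p) - (q - p) * p := by
  have hp' : p * p = p := hp
  have hq' : q * q = q := hq
  simp only [idempotentIntertwiner, sub_mul, mul_sub, one_mul, mul_one, hp', hq']
  abel

end Ring

section NormedRing

variable {A : Type*} [NormedRing A] {p q : A}

lemma norm_one_sub_idempotentIntertwiner_le (hp : IsIdempotentElem p) (hq : IsIdempotentElem q) :
    ‖1 - idempotentIntertwiner p q‖ ≤ ‖p - q‖ * (2 * ‖p‖ + ‖p - q‖) := by
  have hq_norm : ‖q‖ ≤ ‖p‖ + ‖p - q‖ := by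
    simpa using norm_sub_le p (p - q)
  rw [one_sub_idempotentIntertwiner hp hq]
  calc ‖q * (q - p) - (q - p) * p‖ ≤ ‖q‖ * ‖q - p‖ + ‖q - p‖ * ‖p‖ :=
        (norm_sub_le _ _).trans (add_le_add (norm_mul_le _ _) (norm_mul_le _ _))
    _ = ‖q‖ * ‖p - q‖ + ‖p - q‖ * ‖p‖ := by rw [norm_sub_rev]
    _ ≤ (‖p‖ + ‖p - q‖) * ‖p - q‖ + ‖p - q‖ * ‖p‖ := by gcongr
    _ = ‖p - q‖ * (2 * ‖p‖ + ‖p - q‖) := by ring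

lemma isConj_of_norm_sub_mul_lt_one [CompleteSpace A] (hp : IsIdempotentElem p)
    (hq : IsIdempotentElem q) (h : ‖p - q‖ * (2 * ‖p‖ + ‖p - q‖) < 1) : IsConj p q := by
  have hunit : IsUnit (idempotentIntertwiner p q) := by
    simpa using isUnit_one_sub_of_norm_lt_one
      ((norm_one_sub_idempotentIntertwiner_le hp hq).trans_lt h)
  obtain ⟨u, hu⟩ := hunit
  exact ⟨u, hu ▸ idempotentIntertwiner_mul_left hp hq⟩

end NormedRing

theorem stmt1_general {A : Type*} [NormedRing A] [CompleteSpace A]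
    (p q : A) (hp : p * p = p) (hq : q * q = q)
    (h : ‖p - q‖ < 1 / (1 + 2 * ‖p‖)) :
    ∃ u : Aˣ, (u : A) * p * (↑u⁻¹ : A) = q := by
  have hd : ‖p - q‖ * (2 * ‖p‖ + ‖p - q‖) < 1 := by
    have hpos : 0 < 1 + 2 * ‖p‖ := by positivity
    have hd_mul : ‖p - q‖ * (1 + 2 * ‖p‖) < 1 := (lt_div_iff₀ hpos).1 h
    have hd_lt_one : ‖p - q‖ < 1 := by nlinarith [norm_nonneg p]
    nlinarith [norm_nonneg (p - q)]
  obtain ⟨u, hu⟩ := isConj_of_norm_sub_mul_lt_one hp hq hd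
  exact ⟨u, (Units.mul_inv_eq_iff_eq_mul u).2 hu⟩

theorem stmt1 {A : Type*} [NormedRing A] [NormedAlgebra ℝ A] [CompleteSpace A]
    (p q : A) (hp : p * p = p) (hq : q * q = q)
    (h : ‖p - q‖ < 1 / (1 + 2 * ‖p‖)) :
    ∃ u : Aˣ, (u : A) * p * (↑u⁻¹ : A) = q :=
  stmt1_general p q hp hq h
end

section
/- If two idempotents p, q in a unital Banach algebra lie in the same path component of the set of idempotents, then they are conjugate: there is an invertible element g with g·p = q·g. -/
/-!
For idempotents `p, q` the element `u = q p + (1 - q)(1 - p)` intertwines them, `u p = q u`, and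
`u` commutes with its counterpart `v = p q + (1 - p)(1 - q)`, with `u v = 1 - (p - q)²`. So `u` is
invertible as soon as `‖p - q‖ < 1`, and nearby idempotents are conjugate. Conjugacy is an
equivalence relation with open classes on any set of idempotents, hence it has a single class on a
connected one such as a path.
-/

section Ring

variable {R : Type*} [Ring R]

def idempotentConjugator (p q : R) : R := q * p + (1 - q) * (1 - p)

variable {p q : R}

theorem idempotentConjugator_mul_left (hp : IsIdempotentElem p) (hq : IsIdempotentElem q) :
    idempotentConjugator p q * p = q * idempotentConjugator p q := by
  simp only [idempotentConjugator, sub_mul, mul_sub, add_mul, mul_add, one_mul, mul_one,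
    mul_assoc, hp.eq, hq.eq, hq.mul_self_mul]
  abel

theorem idempotentConjugator_mul_swap (hp : IsIdempotentElem p) (hq : IsIdempotentElem q) :
    idempotentConjugator p q * idempotentConjugator q p = 1 - (p - q) ^ 2 := by
  simp only [idempotentConjugator, sq, sub_mul, mul_sub, add_mul, mul_add, one_mul, mul_one,
    mul_assoc, hp.eq, hq.eq, hp.mul_self_mul]
  abel

theorem IsIdempotentElem.isConj_of_isUnit (hp : IsIdempotentElem p) (hq : IsIdempotentElem q)
    (h : IsUnit (1 - (p - q) ^ 2)) : IsConj p q := by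
  have hcomm : Commute (idempotentConjugator p q) (idempotentConjugator q p) := by
    rw [Commute, SemiconjBy, idempotentConjugator_mul_swap hp hq,
      idempotentConjugator_mul_swap hq hp, ← neg_sub q p, neg_sq]
  rw [← idempotentConjugator_mul_swap hp hq, hcomm.isUnit_mul_iff] at h
  obtain ⟨⟨g, hg⟩, -⟩ := h
  exact ⟨g, by rw [SemiconjBy, hg]; exact idempotentConjugator_mul_left hp hq⟩

end Ring

section NormedRing

variable {A : Type*} [NormedRing A] [CompleteSpace A]

theorem IsIdempotentElem.isConj_of_norm_sub_lt_one {p q : A} (hp : IsIdempotentElem p)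
    (hq : IsIdempotentElem q) (h : ‖p - q‖ < 1) : IsConj p q := by
  refine hp.isConj_of_isUnit hq (isUnit_one_sub_of_norm_lt_one ?_)
  calc ‖(p - q) ^ 2‖ ≤ ‖p - q‖ * ‖p - q‖ := by rw [sq]; exact norm_mul_le _ _
    _ < 1 := by nlinarith [norm_nonneg (p - q)]

theorem IsPreconnected.isConj_of_isIdempotentElem {s : Set A} (hs : IsPreconnected s)
    (hidem : ∀ x ∈ s, IsIdempotentElem x) {p q : A} (hp : p ∈ s) (hq : q ∈ s) : IsConj p q := by
  refine hs.induction₂ IsConj (fun x hx ↦ ?_) (fun _ _ _ _ _ _ ↦ IsConj.trans)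
    (fun _ _ _ _ ↦ IsConj.symm) hp hq
  filter_upwards [nhdsWithin_le_nhds (Metric.ball_mem_nhds x one_pos), self_mem_nhdsWithin]
    with y hxy hy
  exact (hidem x hx).isConj_of_norm_sub_lt_one (hidem y hy) (by rwa [← dist_eq_norm'])

end NormedRing

theorem stmt3_general {A : Type*} [NormedRing A] [CompleteSpace A]
    (p q : A)
    (h : JoinedIn {x : A | x * x = x} p q) :
    ∃ g : Aˣ, (g : A) * p = q * (g : A) := by
  obtain ⟨γ, hγ⟩ := h
  exact (isPreconnected_range γ.continuous).isConj_of_isIdempotentElem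
    (by rintro _ ⟨t, rfl⟩; exact hγ t) ⟨0, γ.source⟩ ⟨1, γ.target⟩

theorem stmt3 {A : Type*} [NormedRing A] [NormedAlgebra ℝ A] [CompleteSpace A]
    (p q : A) (hp : p * p = p) (hq : q * q = q)
    (h : JoinedIn {x : A | x * x = x} p q) :
    ∃ g : Aˣ, (g : A) * p = q * (g : A) :=
  stmt3_general p q h
end

section
/- Let E be a Banach space and p ∈ L(E) a continuous projection with range X and kernel Y, and let t ∈ GL(E). If the conjugate projection q = t·p·t⁻¹ is joined to p by a continuous path of idempotents in L(E), then there exist s ∈ GL(E) in the path component of the identity such that s⁻¹·t commutes with p. -/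
/-!
Say `a` and `b` are conjugate in the identity component if `u * a = b * u` for a unit `u` joined
to `1`; this is an equivalence relation. Idempotents `a`, `b` are intertwined by
`u = 1 + (b - a) * (2 * a - 1)`, as `u * a = b * a = b * u`, and `u` lies in the unit ball
around `1`, hence is joined to `1` by a segment of units, once `b` is close to `a`. So the
classes of the relation are relatively open among idempotents, and a path of idempotents
cannot leave a class: `t * p * t⁻¹ = s * p * s⁻¹` for some `s` joined to `1`.
-/
open Topology unitInterval

section Monoid

variable {M : Type*} [Monoid M] [TopologicalSpace M]

def IsConjInIdentityComponent (a b : M) : Prop :=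
  ∃ u : Mˣ, Joined 1 u ∧ SemiconjBy (u : M) a b

variable [ContinuousMul M]

theorem IsConjInIdentityComponent.trans {a b c : M} (hab : IsConjInIdentityComponent a b)
    (hbc : IsConjInIdentityComponent b c) : IsConjInIdentityComponent a c := by
  obtain ⟨u, hu, hu_ab⟩ := hab
  obtain ⟨v, hv, hv_bc⟩ := hbc
  exact ⟨v * u, by simpa using hv.mul hu, hv_bc.mul_left hu_ab⟩

theorem IsConjInIdentityComponent.symm {a b : M} (hab : IsConjInIdentityComponent a b) :
    IsConjInIdentityComponent b a := by
  obtain ⟨u, hu, hu_ab⟩ := hab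
  exact ⟨u⁻¹, by simpa using hu.inv, hu_ab.units_inv_symm_left⟩

theorem JoinedIn.isConjInIdentityComponent {F : Set M}
    (hF : ∀ a ∈ F, ∀ᶠ b in 𝓝[F] a, IsConjInIdentityComponent a b)
    {a b : M} (h : JoinedIn F a b) : IsConjInIdentityComponent a b := by
  have hrange : Set.range h.somePath ⊆ F := Set.range_subset_iff.2 h.somePath_mem
  have hconn : IsPreconnected (Set.range h.somePath) :=
    isPreconnected_range h.somePath.continuous
  refine hconn.induction₂ _ (fun x hx => nhdsWithin_mono x hrange (hF x (hrange hx)))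
    (fun _ _ _ _ _ _ => .trans) (fun _ _ _ _ => .symm) ⟨0, by simp⟩ ⟨1, by simp⟩

end Monoid

theorem IsIdempotentElem.semiconjBy_one_add {R : Type*} [Ring R] {a b : R}
    (ha : IsIdempotentElem a) (hb : IsIdempotentElem b) :
    SemiconjBy (1 + (b - a) * (2 * a - 1)) a b := by
  have h_right : (2 * a - 1) * a = a := by
    rw [sub_mul, mul_assoc, ha.eq, one_mul, two_mul, add_sub_cancel_right]
  have h_left : (1 - a) * (2 * a - 1) = a - 1 := by
    rw [two_mul, one_sub_mul, mul_sub, mul_add, ha.eq, mul_one]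
    abel
  have hb_sub : b * (b - a) = b * (1 - a) := by rw [mul_sub, mul_sub, hb.eq, mul_one]
  change _ * a = b * _
  rw [add_mul, one_mul, mul_assoc, h_right, mul_add, mul_one, ← mul_assoc, hb_sub, mul_assoc,
    h_left, sub_mul, ha.eq, mul_sub, mul_one]
  abel

section NormedAlgebra

variable {A : Type*} [NormedRing A] [NormedAlgebra ℝ A] [CompleteSpace A]

theorem Units.joined_one_oneSub (x : A) (hx : ‖x‖ < 1) : Joined 1 (Units.oneSub x hx) := by
  have hsegment : ∀ r : I, ‖(r : ℝ) • x‖ < 1 := fun r => by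
    rw [norm_smul, Real.norm_of_nonneg r.2.1]
    exact lt_of_le_of_lt (mul_le_of_le_one_left (norm_nonneg x) r.2.2) hx
  have hcont : Continuous fun r : I => Units.oneSub ((r : ℝ) • x) (hsegment r) := by
    refine Units.isOpenEmbedding_val.continuous_iff.2 ?_
    change Continuous fun r : I => (1 : A) - (r : ℝ) • x
    fun_prop
  exact ⟨⟨⟨_, hcont⟩, Units.ext (by simp), Units.ext (by simp)⟩⟩

theorem IsIdempotentElem.eventually_isConjInIdentityComponent {a : A}
    (ha : IsIdempotentElem a) :
    ∀ᶠ b in 𝓝[{r | IsIdempotentElem r}] a, IsConjInIdentityComponent a b := by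
  have hsmall : ∀ᶠ b in 𝓝 a, ‖(a - b) * (2 * a - 1)‖ < 1 := by
    have hcont : Continuous fun b : A => ‖(a - b) * (2 * a - 1)‖ := by fun_prop
    exact hcont.continuousAt.eventually_lt continuousAt_const (by simp)
  filter_upwards [nhdsWithin_le_nhds hsmall, self_mem_nhdsWithin] with b hb hb_idem
  refine ⟨Units.oneSub _ hb, Units.joined_one_oneSub _ hb, ?_⟩
  have hval : 1 - (a - b) * (2 * a - 1) = 1 + (b - a) * (2 * a - 1) := by noncomm_ring
  rw [Units.val_oneSub, hval]
  exact ha.semiconjBy_one_add hb_idem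

end NormedAlgebra

theorem stmt4_general {E : Type*} [NormedAddCommGroup E] [NormedSpace ℝ E] [CompleteSpace E]
    (p : E →L[ℝ] E)
    (t : (E →L[ℝ] E)ˣ)
    (h : JoinedIn {r : E →L[ℝ] E | r * r = r} p ((t : E →L[ℝ] E) * p * (↑t⁻¹ : E →L[ℝ] E))) :
    ∃ s : (E →L[ℝ] E)ˣ, Joined (1 : (E →L[ℝ] E)ˣ) s ∧
      Commute ((↑s⁻¹ : E →L[ℝ] E) * (t : E →L[ℝ] E)) p := by
  obtain ⟨s, hs, hs_conj⟩ := h.isConjInIdentityComponent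
    fun _ ha => IsIdempotentElem.eventually_isConjInIdentityComponent ha
  refine ⟨s, hs, ?_⟩
  have hcomm : Commute ((t⁻¹ * s : (E →L[ℝ] E)ˣ) : E →L[ℝ] E) p := by
    change _ * p = p * _
    rw [Units.val_mul, mul_assoc, hs_conj.eq, ← mul_assoc, ← mul_assoc, ← mul_assoc,
      Units.inv_mul, one_mul, mul_assoc]
  simpa using hcomm.units_inv_left

theorem stmt4 {E : Type*} [NormedAddCommGroup E] [NormedSpace ℝ E] [CompleteSpace E]
    (p : E →L[ℝ] E) (hp : p * p = p)
    (t : (E →L[ℝ] E)ˣ)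
    (h : JoinedIn {r : E →L[ℝ] E | r * r = r} p ((t : E →L[ℝ] E) * p * (↑t⁻¹ : E →L[ℝ] E))) :
    ∃ s : (E →L[ℝ] E)ˣ, Joined (1 : (E →L[ℝ] E)ˣ) s ∧
      Commute ((↑s⁻¹ : E →L[ℝ] E) * (t : E →L[ℝ] E)) p :=
  stmt4_general p t h
end

section
/- Let E be a Banach space, p a continuous projection with range X and kernel Y, t ∈ GL(E), and q = t·p·t⁻¹. Then q lies in the path component of p in the space of idempotents of L(E) if and only if [t] lies in the image of the map π₀(GL(X) × GL(Y)) → π₀(GL(E)) induced by (x,y) ↦ x ⊕ y. -/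
/-!
Idempotents that are close to each other are conjugate by an element close to `1`: if `e, f` are
idempotent then `v = 1 + (f - e)(2e - 1)` satisfies `v e = f v`, and `v` is joined to `1` in the
units through `1 + σ (f - e)(2e - 1)` as soon as `‖(f - e)(2e - 1)‖ < 1`. Since `[0, 1]` is
connected, a path of idempotents from `p` to `q = t p t⁻¹` therefore yields `u` in the identity
component of `GL(E)` with `u p u⁻¹ = q`. Then `u⁻¹ t ∈ [t]` commutes with `p`, i.e. is of the form
`x ⊕ y`. Conversely, if `t` is joined to `x ⊕ y`, conjugating `p` along that path joins `q` to
`(x ⊕ y) p (x ⊕ y)⁻¹ = p`.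
-/

open ContinuousLinearMap Filter Set Topology

section Conjugation

variable {R : Type*} [Monoid R]

theorem IsIdempotentElem.units_conj {e : R} (he : IsIdempotentElem e) (u : Rˣ) :
    IsIdempotentElem (↑u * e * ↑u⁻¹) := by
  simp only [IsIdempotentElem, mul_assoc, Units.inv_mul_cancel_left]
  rw [← mul_assoc e, he.eq]

theorem Units.commute_inv_mul_of_conj_eq {e : R} {u t : Rˣ}
    (h : ↑u * e * ↑u⁻¹ = ↑t * e * ↑t⁻¹) : Commute ↑(u⁻¹ * t) e :=
  calc ↑(u⁻¹ * t) * e = ↑u⁻¹ * (↑t * e * ↑t⁻¹) * ↑t := by simp [mul_assoc]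
    _ = ↑u⁻¹ * (↑u * e * ↑u⁻¹) * ↑t := by rw [h]
    _ = e * ↑(u⁻¹ * t) := by simp [mul_assoc]

variable [TopologicalSpace R]

def ConjByIdentityComponent (e f : R) : Prop :=
  ∃ u : Rˣ, Joined 1 u ∧ ↑u * e * ↑u⁻¹ = f

variable [ContinuousMul R]

theorem ConjByIdentityComponent.symm {e f : R} (h : ConjByIdentityComponent e f) :
    ConjByIdentityComponent f e := by
  obtain ⟨u, hu, rfl⟩ := h
  refine ⟨u⁻¹, by simpa using hu.inv, ?_⟩
  simp [mul_assoc]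

theorem ConjByIdentityComponent.trans {e f g : R} (hef : ConjByIdentityComponent e f)
    (hfg : ConjByIdentityComponent f g) : ConjByIdentityComponent e g := by
  obtain ⟨u, hu, rfl⟩ := hef
  obtain ⟨v, hv, rfl⟩ := hfg
  refine ⟨v * u, by simpa using hv.mul hu, ?_⟩
  simp [mul_assoc]

theorem IsIdempotentElem.joinedIn_units_conj {e : R} (he : IsIdempotentElem e) {u v : Rˣ}
    (huv : Joined u v) :
    JoinedIn {r | IsIdempotentElem r} (↑u * e * ↑u⁻¹) (↑v * e * ↑v⁻¹) := by
  have hconj : Continuous fun w : Rˣ => (w : R) * e * ↑w⁻¹ :=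
    (Units.continuous_val.mul continuous_const).mul Units.continuous_coe_inv
  refine ((joinedIn_univ.2 huv).map hconj).mono ?_
  rintro _ ⟨w, -, rfl⟩
  exact he.units_conj w

end Conjugation

theorem IsIdempotentElem.one_add_sub_mul_two_mul_sub_one_mul {R : Type*} [Ring R] {e f : R}
    (he : IsIdempotentElem e) (hf : IsIdempotentElem f) :
    (1 + (f - e) * (2 * e - 1)) * e = f * (1 + (f - e) * (2 * e - 1)) := by
  have hf' : ∀ z : R, f * (f * z) = f * z := fun z => by rw [← mul_assoc, hf.eq]
  simp only [two_mul, add_mul, sub_mul, mul_add, mul_sub, mul_one, one_mul, mul_assoc, he.eq,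
    hf.eq, hf']
  abel

section BanachAlgebra

variable {R : Type*} [NormedRing R] [NormedAlgebra ℝ R] [CompleteSpace R]

theorem Units.exists_val_eq_one_add_joined_one {a : R} (ha : ‖a‖ < 1) :
    ∃ v : Rˣ, (v : R) = 1 + a ∧ Joined 1 v := by
  have hnorm : ∀ σ : unitInterval, ‖-((σ : ℝ) • a)‖ < 1 := fun σ => by
    rw [norm_neg, norm_smul, Real.norm_of_nonneg σ.2.1]
    exact (mul_le_of_le_one_left (norm_nonneg a) σ.2.2).trans_lt ha
  let γ : unitInterval → Rˣ := fun σ => Units.oneSub _ (hnorm σ)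
  have hγ : ∀ σ, (γ σ : R) = 1 + (σ : ℝ) • a := fun σ => by simp [γ, sub_eq_add_neg]
  have hγc : Continuous γ := by
    rw [Units.isOpenEmbedding_val.isEmbedding.continuous_iff]
    simp only [Function.comp_def, hγ]
    fun_prop
  exact ⟨γ 1, by simp [hγ], ⟨⟨⟨γ, hγc⟩, Units.ext (by simp [hγ]), rfl⟩⟩⟩

theorem conjByIdentityComponent_of_norm_lt_one {e f : R} (he : IsIdempotentElem e)
    (hf : IsIdempotentElem f) (hnorm : ‖(f - e) * (2 * e - 1)‖ < 1) :
    ConjByIdentityComponent e f := by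
  obtain ⟨v, hv, hv1⟩ := Units.exists_val_eq_one_add_joined_one hnorm
  refine ⟨v, hv1, ?_⟩
  rw [hv, he.one_add_sub_mul_two_mul_sub_one_mul hf, mul_assoc, ← hv, Units.mul_inv, mul_one]

theorem IsIdempotentElem.eventually_conjByIdentityComponent {e : R} (he : IsIdempotentElem e) :
    ∀ᶠ f in 𝓝[{r | IsIdempotentElem r}] e, ConjByIdentityComponent e f := by
  have hlim : Tendsto (fun f : R => (f - e) * (2 * e - 1)) (𝓝 e) (𝓝 0) := by
    have hcont : Continuous fun f : R => (f - e) * (2 * e - 1) := by fun_prop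
    simpa using hcont.tendsto e
  filter_upwards [self_mem_nhdsWithin,
    nhdsWithin_le_nhds (hlim (Metric.ball_mem_nhds 0 one_pos))] with f hf hball
  exact conjByIdentityComponent_of_norm_lt_one he hf (mem_ball_zero_iff.1 hball)

theorem JoinedIn.conjByIdentityComponent {e f : R} (h : JoinedIn {r | IsIdempotentElem r} e f) :
    ConjByIdentityComponent e f := by
  obtain ⟨γ, hγ⟩ := h
  refine (isConnected_range γ.continuous).isPreconnected.induction₂ _ (fun g hg => ?_)
    (fun _ _ _ _ _ _ => .trans) (fun _ _ _ _ => .symm) ⟨0, γ.source⟩ ⟨1, γ.target⟩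
  obtain ⟨σ, rfl⟩ := hg
  exact nhdsWithin_mono _ (range_subset_iff.2 hγ) (hγ σ).eventually_conjByIdentityComponent

end BanachAlgebra

namespace ContinuousLinearMap

variable {R M N : Type*} [Semiring R] [TopologicalSpace M] [AddCommMonoid M] [Module R M]
  [TopologicalSpace N] [AddCommMonoid N] [Module R N]

theorem prodMap_mul_prodMap (a c : M →L[R] M) (b d : N →L[R] N) :
    a.prodMap b * c.prodMap d = (a * c).prodMap (b * d) :=
  rfl

theorem prodMap_eq_one_iff {a : M →L[R] M} {b : N →L[R] N} :
    a.prodMap b = 1 ↔ a = 1 ∧ b = 1 := by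
  refine ⟨fun h => ⟨ext fun x => ?_, ext fun y => ?_⟩, fun h => by rw [h.1, h.2]; rfl⟩
  · simpa using congr(($h (x, 0)).1)
  · simpa using congr(($h (0, y)).2)

theorem commute_prodMap_id_zero (a : M →L[R] M) (b : N →L[R] N) :
    Commute (a.prodMap b) ((ContinuousLinearMap.id R M).prodMap 0) := by
  simp only [Commute, SemiconjBy, prodMap_mul_prodMap, mul_zero, zero_mul]
  rfl

theorem eq_prodMap_of_commute {w : M × N →L[R] M × N}
    (h : Commute w ((ContinuousLinearMap.id R M).prodMap 0)) :
    w = (fst R M N ∘L w ∘L inl R M N).prodMap (snd R M N ∘L w ∘L inr R M N) := by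
  have hfst : ∀ v : M × N, w (v.1, 0) = ((w v).1, 0) := fun v => by
    simpa [Prod.map] using congr($h.eq v)
  refine ext fun ⟨x, y⟩ => Prod.ext ?_ ?_
  · simpa using congr(($(hfst (x, y))).1).symm
  · have hsplit : w (x, y) = w (x, 0) + w (0, y) := by rw [← map_add]; simp
    have hsnd : (w (x, 0)).2 = 0 := congr(($(hfst (x, 0))).2)
    simp [hsplit, hsnd]

theorem exists_units_prodMap_of_commute (w : (M × N →L[R] M × N)ˣ)
    (h : Commute (w : M × N →L[R] M × N) ((ContinuousLinearMap.id R M).prodMap 0)) :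
    ∃ (x : (M →L[R] M)ˣ) (y : (N →L[R] N)ˣ),
      (w : M × N →L[R] M × N) = (x : M →L[R] M).prodMap ↑y := by
  have hw := eq_prodMap_of_commute h
  have hw' := eq_prodMap_of_commute h.units_inv_left
  have hmul := w.mul_inv
  have hmul' := w.inv_mul
  rw [hw, hw', prodMap_mul_prodMap, prodMap_eq_one_iff] at hmul hmul'
  exact ⟨⟨_, _, hmul.1, hmul'.1⟩, ⟨_, _, hmul.2, hmul'.2⟩, hw⟩

end ContinuousLinearMap

theorem stmt5 {X Y : Type*} [NormedAddCommGroup X] [NormedSpace ℝ X] [CompleteSpace X]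
    [NormedAddCommGroup Y] [NormedSpace ℝ Y] [CompleteSpace Y]
    (p : (X × Y) →L[ℝ] (X × Y))
    (hp : p = (ContinuousLinearMap.id ℝ X).prodMap (0 : Y →L[ℝ] Y))
    (t : ((X × Y) →L[ℝ] (X × Y))ˣ) :
    JoinedIn {r : (X × Y) →L[ℝ] (X × Y) | r * r = r} p
        ((t : (X × Y) →L[ℝ] (X × Y)) * p * (↑t⁻¹ : (X × Y) →L[ℝ] (X × Y))) ↔
      ∃ (x : (X →L[ℝ] X)ˣ) (y : (Y →L[ℝ] Y)ˣ) (s : ((X × Y) →L[ℝ] (X × Y))ˣ),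
        (s : (X × Y) →L[ℝ] (X × Y)) = (x : X →L[ℝ] X).prodMap (y : Y →L[ℝ] Y) ∧
        Joined t s := by
  have hidem : IsIdempotentElem p := by subst hp; rfl
  constructor
  · intro h
    obtain ⟨u, hu, hconj⟩ := h.conjByIdentityComponent
    obtain ⟨x, y, hxy⟩ :=
      exists_units_prodMap_of_commute (u⁻¹ * t) (hp ▸ Units.commute_inv_mul_of_conj_eq hconj)
    exact ⟨x, y, u⁻¹ * t, hxy, by simpa using hu.inv.mul (Joined.refl t)⟩
  · rintro ⟨x, y, s, hs, hts⟩
    have hsp : (s : (X × Y) →L[ℝ] (X × Y)) * p * ↑s⁻¹ = p := by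
      rw [(hs ▸ hp ▸ commute_prodMap_id_zero _ _ : Commute _ p).eq, mul_assoc, Units.mul_inv,
        mul_one]
    have hjoin := hidem.joinedIn_units_conj hts.symm
    rwa [hsp] at hjoin
end

section
/- Let E be a Banach space and p a continuous projection with range X and kernel Y. Every projection conjugate to p (i.e., of the form t·p·t⁻¹ with t ∈ GL(E)) is joined to p by a continuous path of projections if and only if the inclusion GL(X) × GL(Y) → GL(E), (x,y) ↦ x ⊕ y, induces a surjection on path components π₀. -/
/-! For idempotents `e`, `f` of a Banach algebra, `f * e + (1 - f) * (1 - e)` maps the range and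
kernel of `e` into those of `f`, and it equals `1` when `f = e`. So an idempotent close to `e` is
conjugate to `e` by a unit close to `1`, which a segment joins to `1`; by connectedness of `[0, 1]`,
the endpoints of a path of idempotents are conjugate by a unit `u` in the identity path component.
For a path from `p = 1 ⊕ 0` to `t p t⁻¹`, the unit `u⁻¹ t` is joined to `t` and commutes with `p`,
hence is block diagonal. Conversely, conjugating `p` along a path from `t` to a block-diagonal unit
gives a path of idempotents from `t p t⁻¹` to `p`. -/

open Set Filter Topology

section Monoid

variable {M : Type*} [Monoid M]

theorem IsIdempotentElem.units_conj_s6 {p : M} (hp : IsIdempotentElem p) (u : Mˣ) :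
    IsIdempotentElem ((u : M) * p * ↑u⁻¹) := by
  simp only [IsIdempotentElem, mul_assoc, Units.inv_mul_cancel_left]
  rw [← mul_assoc p, hp.eq]

variable [TopologicalSpace M] [ContinuousMul M]

theorem Joined.joinedIn_isIdempotentElem_conj {p : M} (hp : IsIdempotentElem p) {s t : Mˣ}
    (h : Joined s t) :
    JoinedIn {r : M | IsIdempotentElem r} (s * p * ↑s⁻¹) (t * p * ↑t⁻¹) := by
  have hconj : Continuous fun u : Mˣ => (u : M) * p * ↑u⁻¹ := by
    fun_prop
  refine ((joinedIn_univ.2 h).map hconj).mono ?_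
  rintro _ ⟨u, -, rfl⟩
  exact hp.units_conj_s6 u

end Monoid

section Ring

variable {R : Type*} [Ring R]

theorem IsIdempotentElem.semiconjBy_intertwiner {e f : R} (he : IsIdempotentElem e)
    (hf : IsIdempotentElem f) : SemiconjBy (f * e + (1 - f) * (1 - e)) e f := by
  have h₁ : (1 - f) * (1 - e) * e = 0 := by rw [mul_assoc, he.one_sub_mul_self, mul_zero]
  have h₂ : f * ((1 - f) * (1 - e)) = 0 := by rw [← mul_assoc, hf.mul_one_sub_self, zero_mul]
  calc (f * e + (1 - f) * (1 - e)) * e = f * e := by rw [add_mul, h₁, add_zero, mul_assoc, he.eq]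
    _ = f * (f * e + (1 - f) * (1 - e)) := by rw [mul_add, h₂, add_zero, ← mul_assoc, hf.eq]

end Ring

section NormedRing

variable {R : Type*} [NormedRing R] [NormedAlgebra ℝ R] [CompleteSpace R]

theorem Units.joined_one_oneSub_s6 (t : R) (ht : ‖t‖ < 1) : Joined 1 (Units.oneSub t ht) := by
  have hsmul (s : unitInterval) : ‖(s : ℝ) • t‖ < 1 := by
    rw [norm_smul, Real.norm_of_nonneg s.2.1]
    exact mul_lt_one_of_nonneg_of_lt_one_right s.2.2 (norm_nonneg t) ht
  refine ⟨⟨⟨fun s => Units.oneSub _ (hsmul s), ?_⟩, ?_, ?_⟩⟩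
  · rw [Units.isOpenEmbedding_val.continuous_iff]
    simp only [Function.comp_def, Units.val_oneSub]
    fun_prop
  · ext; simp
  · ext; simp

theorem Units.exists_mem_pathComponentOne_val_eq_of_mem_ball {c : R}
    (hc : c ∈ Metric.ball (1 : R) 1) :
    ∃ u ∈ Subgroup.pathComponentOne Rˣ, (u : R) = c := by
  have h : ‖1 - c‖ < 1 := by rwa [norm_sub_rev, ← dist_eq_norm]
  exact ⟨Units.oneSub (1 - c) h, Units.joined_one_oneSub_s6 _ h, by simp⟩

theorem IsIdempotentElem.eventually_exists_semiconjBy {e : R} (he : IsIdempotentElem e) :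
    ∀ᶠ f in 𝓝[{r | IsIdempotentElem r}] e,
      ∃ u ∈ Subgroup.pathComponentOne Rˣ, SemiconjBy (u : R) e f := by
  have hc : Tendsto (fun f => f * e + (1 - f) * (1 - e)) (𝓝 e) (𝓝 1) := by
    have hcont : Continuous fun f : R => f * e + (1 - f) * (1 - e) := by fun_prop
    simpa only [he.eq, he.one_sub.eq, add_sub_cancel] using hcont.tendsto e
  filter_upwards [nhdsWithin_le_nhds (hc.eventually (Metric.ball_mem_nhds 1 one_pos)),
    self_mem_nhdsWithin] with f hclose hf
  obtain ⟨u, hu, hval⟩ := Units.exists_mem_pathComponentOne_val_eq_of_mem_ball hclose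
  exact ⟨u, hu, hval ▸ he.semiconjBy_intertwiner hf⟩

theorem JoinedIn.exists_mem_pathComponentOne_semiconjBy {e f : R}
    (h : JoinedIn {r : R | IsIdempotentElem r} e f) :
    ∃ u ∈ Subgroup.pathComponentOne Rˣ, SemiconjBy (u : R) e f := by
  obtain ⟨γ, hγ⟩ := h
  have hrange : range γ ⊆ {r | IsIdempotentElem r} := range_subset_iff.2 hγ
  refine (isPreconnected_range γ.continuous).induction₂
    (fun a b => ∃ u ∈ Subgroup.pathComponentOne Rˣ, SemiconjBy (u : R) a b)
    (fun a ha => nhdsWithin_mono _ hrange (hrange ha).eventually_exists_semiconjBy) ?_ ?_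
    ⟨0, γ.source⟩ ⟨1, γ.target⟩
  · rintro a b c - - - ⟨u, hu, hab⟩ ⟨v, hv, hbc⟩
    exact ⟨v * u, mul_mem hv hu, by simpa using hbc.mul_left hab⟩
  · rintro a b - - ⟨u, hu, hab⟩
    exact ⟨u⁻¹, inv_mem hu, hab.units_inv_symm_left⟩

end NormedRing

namespace ContinuousLinearMap

variable {S M N : Type*} [Semiring S] [TopologicalSpace M] [AddCommMonoid M] [Module S M]
  [TopologicalSpace N] [AddCommMonoid N] [Module S N]

theorem prodMap_commute_id_prodMap_zero (a : M →L[S] M) (b : N →L[S] N) :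
    Commute (a.prodMap b) ((ContinuousLinearMap.id S M).prodMap (0 : N →L[S] N)) := by
  ext <;> simp

theorem eq_prodMap_of_commute_id_prodMap_zero {m : (M × N) →L[S] (M × N)}
    (hm : Commute m ((ContinuousLinearMap.id S M).prodMap (0 : N →L[S] N))) :
    m = ((fst S M N).comp (m.comp (inl S M N))).prodMap
      ((snd S M N).comp (m.comp (inr S M N))) := by
  have hproj (a : M) (b : N) : m (a, 0) = ((m (a, b)).1, 0) := by
    simpa [mul_apply, Prod.map] using congrArg (fun g : (M × N) →L[S] (M × N) => g (a, b)) hm.eq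
  refine ext fun ⟨a, b⟩ => Prod.ext ?_ ?_
  · simp [hproj a b]
  · have hsplit : m (a, b) = m (a, 0) + m (0, b) := by
      rw [← map_add, Prod.mk_add_mk, add_zero, zero_add]
    have hsnd : (m (a, 0)).2 = 0 := by rw [hproj a 0]
    simp [hsplit, hsnd]

theorem prodMap_mul_prodMap_eq_one {a a' : M →L[S] M} {b b' : N →L[S] N}
    (h : a.prodMap b * a'.prodMap b' = 1) : a * a' = 1 ∧ b * b' = 1 := by
  constructor <;> ext v
  · simpa [mul_apply] using congrArg (fun g : (M × N) →L[S] (M × N) => (g (v, 0)).1) h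
  · simpa [mul_apply] using congrArg (fun g : (M × N) →L[S] (M × N) => (g (0, v)).2) h

theorem exists_units_prodMap_eq_of_commute {s : ((M × N) →L[S] (M × N))ˣ}
    (hs : Commute (s : (M × N) →L[S] (M × N))
      ((ContinuousLinearMap.id S M).prodMap (0 : N →L[S] N))) :
    ∃ (x : (M →L[S] M)ˣ) (y : (N →L[S] N)ˣ),
      (s : (M × N) →L[S] (M × N)) = (x : M →L[S] M).prodMap y := by
  have hs₁ := eq_prodMap_of_commute_id_prodMap_zero hs
  have hs₂ := eq_prodMap_of_commute_id_prodMap_zero hs.units_inv_left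
  obtain ⟨hx, hy⟩ := prodMap_mul_prodMap_eq_one (hs₁ ▸ hs₂ ▸ s.mul_inv)
  obtain ⟨hx', hy'⟩ := prodMap_mul_prodMap_eq_one (hs₁ ▸ hs₂ ▸ s.inv_mul)
  exact ⟨⟨_, _, hx, hx'⟩, ⟨_, _, hy, hy'⟩, hs₁⟩

end ContinuousLinearMap

theorem stmt6 {X Y : Type*} [NormedAddCommGroup X] [NormedSpace ℝ X] [CompleteSpace X]
    [NormedAddCommGroup Y] [NormedSpace ℝ Y] [CompleteSpace Y]
    (p : (X × Y) →L[ℝ] (X × Y))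
    (hp : p = (ContinuousLinearMap.id ℝ X).prodMap (0 : Y →L[ℝ] Y)) :
    (∀ t : ((X × Y) →L[ℝ] (X × Y))ˣ,
        JoinedIn {r : (X × Y) →L[ℝ] (X × Y) | r * r = r} p
          ((t : (X × Y) →L[ℝ] (X × Y)) * p * (↑t⁻¹ : (X × Y) →L[ℝ] (X × Y)))) ↔
      (∀ t : ((X × Y) →L[ℝ] (X × Y))ˣ,
        ∃ (x : (X →L[ℝ] X)ˣ) (y : (Y →L[ℝ] Y)ˣ) (s : ((X × Y) →L[ℝ] (X × Y))ˣ),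
          (s : (X × Y) →L[ℝ] (X × Y)) = (x : X →L[ℝ] X).prodMap (y : Y →L[ℝ] Y) ∧
          Joined t s) := by
  subst hp
  constructor
  · intro h t
    obtain ⟨u, hu, hup⟩ := (h t).exists_mem_pathComponentOne_semiconjBy
    have hcomm : Commute (↑(u⁻¹ * t))
        ((ContinuousLinearMap.id ℝ X).prodMap (0 : Y →L[ℝ] Y)) := by
      rw [Units.val_mul]
      exact hup.units_inv_symm_left.mul_left (Units.mk_semiconjBy t _)
    obtain ⟨x, y, hxy⟩ := ContinuousLinearMap.exists_units_prodMap_eq_of_commute hcomm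
    have hu' : Joined 1 u⁻¹ := inv_mem hu
    exact ⟨x, y, u⁻¹ * t, hxy, by simpa using hu'.mul (Joined.refl t)⟩
  · intro h t
    obtain ⟨x, y, s, hs, hts⟩ := h t
    have hP : IsIdempotentElem ((ContinuousLinearMap.id ℝ X).prodMap (0 : Y →L[ℝ] Y)) := by
      ext <;> simp
    have hsP := ContinuousLinearMap.prodMap_commute_id_prodMap_zero (S := ℝ) x.val y.val
    rw [← hs] at hsP
    have hJ := (hts.joinedIn_isIdempotentElem_conj hP).symm
    rwa [hsP.eq, Units.mul_inv_cancel_right] at hJ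
end

section
/- In the real n×n matrices, two idempotent matrices p and q are joined by a continuous path of idempotents if and only if rank p = rank q. -/
/-!
The rank of an idempotent matrix is its trace, a continuous function, so the rank is constant
along a path of idempotents.

Conversely, if idempotents `e`, `f` satisfy `e f + f e = e + f`, which holds when they have the
same range or the same kernel, then every point of the segment `[e, f]` is idempotent. Subspaces
of equal dimension have a common complement `C`, so for idempotents `p`, `q` of equal rank the
chain `p, P, Q, q` of such segments, with `P` and `Q` the projections onto `range p` and
`range q` along `C`, joins `p` to `q`.
-/

open Module LinearMap

theorem IsIdempotentElem.joinedIn_of_mul_add_mul_eq {A : Type*} [Ring A] [Algebra ℝ A]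
    [TopologicalSpace A] [ContinuousAdd A] [ContinuousSMul ℝ A] {e f : A}
    (he : IsIdempotentElem e) (hf : IsIdempotentElem f) (h : e * f + f * e = e + f) :
    JoinedIn {x : A | IsIdempotentElem x} e f := by
  refine JoinedIn.of_segment_subset ?_
  rintro _ ⟨a, b, -, -, hab, rfl⟩
  calc (a • e + b • f) * (a • e + b • f)
      = (a * a) • (e * e) + (a * b) • (e * f + f * e) + (b * b) • (f * f) := by
        simp only [add_mul, mul_add, smul_mul_smul_comm, smul_add, mul_comm b a]; abel
    _ = (a * (a + b)) • e + (b * (a + b)) • f := by rw [he.eq, hf.eq, h]; module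
    _ = a • e + b • f := by rw [hab, mul_one, mul_one]

section
variable {R M : Type*} [Ring R] [AddCommGroup M] [Module R M] {e f : Module.End R M}

theorem LinearMap.IsIdempotentElem.mul_add_mul_eq_of_range_eq (he : IsIdempotentElem e)
    (hf : IsIdempotentElem f) (h : range e = range f) : e * f + f * e = e + f := by
  have hef : e * f = f := (LinearMap.IsIdempotentElem.comp_eq_right_iff he f).2 h.ge
  have hfe : f * e = e := (LinearMap.IsIdempotentElem.comp_eq_right_iff hf e).2 h.le
  rw [hef, hfe, add_comm]

theorem LinearMap.IsIdempotentElem.mul_add_mul_eq_of_ker_eq (he : IsIdempotentElem e)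
    (hf : IsIdempotentElem f) (h : ker e = ker f) : e * f + f * e = e + f := by
  have hef : e * f = e := (LinearMap.IsIdempotentElem.comp_eq_left_iff hf e).2 h.ge
  have hfe : f * e = f := (LinearMap.IsIdempotentElem.comp_eq_left_iff he f).2 h.le
  rw [hef, hfe]
end

theorem Submodule.exists_notMem_of_ne_top_of_ne_top {R M : Type*} [Ring R] [AddCommGroup M]
    [Module R M] {P Q : Submodule R M} (hP : P ≠ ⊤) (hQ : Q ≠ ⊤) : ∃ v, v ∉ P ∧ v ∉ Q := by
  obtain ⟨u, hu⟩ := SetLike.exists_not_mem_of_ne_top P hP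
  obtain ⟨w, hw⟩ := SetLike.exists_not_mem_of_ne_top Q hQ
  by_cases huQ : u ∈ Q
  · by_cases hwP : w ∈ P
    · exact ⟨u + w, (P.add_mem_iff_left hwP).not.2 hu, (Q.add_mem_iff_right huQ).not.2 hw⟩
    · exact ⟨w, hwP, hw⟩
  · exact ⟨u, hu, huQ⟩

theorem Submodule.exists_isCompl_isCompl {K V : Type*} [DivisionRing K] [AddCommGroup V]
    [Module K V] [FiniteDimensional K V] {U W : Submodule K V}
    (h : finrank K U = finrank K W) : ∃ C : Submodule K V, IsCompl U C ∧ IsCompl W C := by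
  suffices ∀ k (C : Submodule K V), Disjoint U C → Disjoint W C →
      finrank K V ≤ finrank K U + finrank K C + k → ∃ C', IsCompl U C' ∧ IsCompl W C' from
    this (finrank K V) ⊥ disjoint_bot_right disjoint_bot_right (by simp)
  intro k
  induction k with
  | zero =>
    intro C hU hW hdim
    exact ⟨C, (isCompl_iff_disjoint _ _ hdim).2 hU, (isCompl_iff_disjoint _ _ (h ▸ hdim)).2 hW⟩
  | succ k ih =>
    intro C hU hW hdim
    by_cases hle : finrank K V ≤ finrank K U + finrank K C
    · exact ih C hU hW (by omega)
    have hne_top : ∀ X : Submodule K V, finrank K X = finrank K U → X ⊔ C ≠ ⊤ := by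
      intro X hX htop
      have := finrank_add_le_finrank_add_finrank X C
      rw [htop, finrank_top, hX] at this
      exact hle this
    obtain ⟨v, hvU, hvW⟩ :=
      exists_notMem_of_ne_top_of_ne_top (hne_top U rfl) (hne_top W h.symm)
    have hvC : v ∉ C := fun hv => hvU (mem_sup_right hv)
    refine ih (C ⊔ span K {v}) (hU.disjoint_sup_right_of_disjoint_sup_left
      (disjoint_span_singleton_of_notMem hvU)) (hW.disjoint_sup_right_of_disjoint_sup_left
      (disjoint_span_singleton_of_notMem hvW)) ?_
    rw [finrank_sup_span_singleton hvC]
    omega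

namespace Matrix

variable {m : Type*} [Fintype m] [DecidableEq m]

theorem trace_eq_rank_of_isIdempotentElem {K : Type*} [Field K] {p : Matrix m m K}
    (hp : IsIdempotentElem p) : p.trace = p.rank := by
  have hp' : IsIdempotentElem p.toLin' := hp.map toLinAlgEquiv'
  rw [← trace_toLin'_eq, (LinearMap.IsIdempotentElem.isProj_range _ hp').trace]
  rfl

theorem rank_eq_of_joinedIn_isIdempotentElem {p q : Matrix m m ℝ}
    (h : JoinedIn {x | IsIdempotentElem x} p q) : p.rank = q.rank := by
  obtain ⟨γ, hγ⟩ := h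
  have hrank : Continuous fun t => (γ t).rank := by
    rw [Nat.isClosedEmbedding_coe_real.continuous_iff]
    simp_rw [Function.comp_def, ← trace_eq_rank_of_isIdempotentElem (hγ _)]
    exact γ.continuous.matrix_trace
  simpa using PreconnectedSpace.constant inferInstance hrank (x := 0) (y := 1)

theorem joinedIn_isIdempotentElem_of_range_eq_or_ker_eq {p q : Matrix m m ℝ}
    (hp : IsIdempotentElem p) (hq : IsIdempotentElem q)
    (h : range p.toLin' = range q.toLin' ∨ ker p.toLin' = ker q.toLin') :
    JoinedIn {x | IsIdempotentElem x} p q := by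
  refine hp.joinedIn_of_mul_add_mul_eq hq (toLinAlgEquiv'.injective ?_)
  simp only [map_add, map_mul]
  rcases h with h | h
  · exact (hp.map _).mul_add_mul_eq_of_range_eq (hq.map _) h
  · exact (hp.map _).mul_add_mul_eq_of_ker_eq (hq.map _) h

theorem joinedIn_isIdempotentElem_of_rank_eq {p q : Matrix m m ℝ}
    (hp : IsIdempotentElem p) (hq : IsIdempotentElem q) (h : p.rank = q.rank) :
    JoinedIn {x | IsIdempotentElem x} p q := by
  obtain ⟨C, hpC, hqC⟩ :=
    Submodule.exists_isCompl_isCompl (U := range p.toLin') (W := range q.toLin') h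
  set p' := LinearMap.toMatrix' ((range p.toLin').projection C hpC)
  set q' := LinearMap.toMatrix' ((range q.toLin').projection C hqC)
  have hp' : IsIdempotentElem p' :=
    (Submodule.isIdempotentElem_projection hpC).map LinearMap.toMatrixAlgEquiv'
  have hq' : IsIdempotentElem q' :=
    (Submodule.isIdempotentElem_projection hqC).map LinearMap.toMatrixAlgEquiv'
  refine (joinedIn_isIdempotentElem_of_range_eq_or_ker_eq hp hp' (.inl ?_)).trans
    ((joinedIn_isIdempotentElem_of_range_eq_or_ker_eq hp' hq' (.inr ?_)).trans
      (joinedIn_isIdempotentElem_of_range_eq_or_ker_eq hq' hq (.inl ?_)))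
  · simp [p']
  · simp [p', q']
  · simp [q']

end Matrix

theorem stmt9 {n : ℕ} (p q : Matrix (Fin n) (Fin n) ℝ)
    (hp : p * p = p) (hq : q * q = q) :
    JoinedIn {m : Matrix (Fin n) (Fin n) ℝ | m * m = m} p q ↔ p.rank = q.rank :=
  ⟨Matrix.rank_eq_of_joinedIn_isIdempotentElem, Matrix.joinedIn_isIdempotentElem_of_rank_eq hp hq⟩
end
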